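/- arXiv:2201.07868 — 2 statements merged into one kernel-verified Lean document; each statement's English description precedes it below -/
import Mathlib

section
/- Let d ≥ 2 and let c₀ ∈ ℚ̄ be such that f(z) = z^d + c₀ is PCF of exact type (m, n) with m ≥ 1. Let K = ℚ(c₀). Then for every i ≥ 1, the principal ideal ⟨a_i(c₀)⟩ of O_K equals ⟨a_n(c₀)⟩ if n divides i, and equals O_K (i.e., a_i(c₀) is a unit) if n does not divide i. -/
/-! Write `f z = z ^ d + c`, so `a i = f^[i] 0`. Reduction modulo an ideal `P` semiconjugates
`f` to the same map over `R ⧸ P`, hence `a i ∈ P` exactly when `r ∣ i`, where `r` is the period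
of `0` modulo `P`. If `P` is proper and contains some `a i` with `i ≥ 1`, then `r = n`. Indeed
`r ∣ n` because `0` falls into the `n`-cycle of `f`. Conversely, for `x, y ∈ P` we have
`f y - f x = (y - x) * s` with `s ∈ P`, so two distinct points of period `n` cannot both lie in
`P`; applied to the cycle point `x = a (m * r)` and `f^[r] x` this gives `n ∣ r`.
Taking `P = ⟨a i⟩` yields both halves of the theorem. -/

open NumberField Function Finset

theorem eq_iterate_of_succ {α : Type*} {f : α → α} {a : ℕ → α}
    (h : ∀ i, a (i + 1) = f (a i)) (i : ℕ) : a i = f^[i] (a 0) := by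
  induction i with
  | zero => rfl
  | succ i ih => rw [h, ih, iterate_succ_apply']

theorem minimalPeriod_eq_of_iterate_ne {α : Type*} {f : α → α} {x : α} {n : ℕ} (hn : 0 < n)
    (hx : IsPeriodicPt f n x) (hmin : ∀ k, 0 < k → k < n → f^[k] x ≠ x) :
    minimalPeriod f x = n :=
  (hx.minimalPeriod_le hn).antisymm <| not_lt.1 fun hlt =>
    hmin _ (hx.minimalPeriod_pos hn) hlt iterate_minimalPeriod

section

variable {R S : Type*} [CommRing R] [CommRing S]

theorem sub_dvd_iterate_sub {f : R → R} (hf : ∀ u v, u - v ∣ f u - f v) (t : ℕ) (u v : R) :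
    u - v ∣ f^[t] u - f^[t] v := by
  induction t generalizing u v with
  | zero => exact dvd_rfl
  | succ t ih => exact (hf u v).trans (ih _ _)

def unicriticalMap (d : ℕ) (c : R) (z : R) : R := z ^ d + c

variable {d : ℕ} {c : R}

theorem semiconj_unicriticalMap (φ : R →+* S) :
    Semiconj φ (unicriticalMap d c) (unicriticalMap d (φ c)) :=
  fun z => by simp [unicriticalMap]

theorem unicriticalMap_sub_unicriticalMap (x y : R) :
    unicriticalMap d c y - unicriticalMap d c x =
      (∑ k ∈ range d, y ^ k * x ^ (d - 1 - k)) * (y - x) := by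
  rw [geom_sum₂_mul]; simp [unicriticalMap]

theorem iterate_unicriticalMap_zero_mem_iff (I : Ideal R) (i : ℕ) :
    (unicriticalMap d c)^[i] 0 ∈ I ↔
      minimalPeriod (unicriticalMap d (Ideal.Quotient.mk I c)) 0 ∣ i := by
  rw [← isPeriodicPt_iff_minimalPeriod_dvd, IsPeriodicPt, IsFixedPt,
    ← Ideal.Quotient.eq_zero_iff_mem, ((semiconj_unicriticalMap _).iterate_right i).eq, map_zero]

variable [IsDomain R]

theorem eq_of_isPeriodicPt_unicriticalMap_of_mem (hd : 2 ≤ d) {P : Ideal R} (hP : P ≠ ⊤)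
    {n : ℕ} (hn : 0 < n) {x y : R} (hx : IsPeriodicPt (unicriticalMap d c) n x)
    (hy : IsPeriodicPt (unicriticalMap d c) n y) (hxP : x ∈ P) (hyP : y ∈ P) : x = y := by
  set s := ∑ k ∈ range d, y ^ k * x ^ (d - 1 - k)
  have hs : s ∈ P := by
    refine Ideal.sum_mem P fun k _ => ?_
    rcases Nat.eq_zero_or_pos k with rfl | hk
    · exact P.mul_mem_left _ (P.pow_mem_of_mem hxP _ (by omega))
    · exact P.mul_mem_right _ (P.pow_mem_of_mem hyP _ hk)
  obtain ⟨n, rfl⟩ := Nat.exists_eq_add_one_of_ne_zero hn.ne'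
  obtain ⟨q, hq⟩ := sub_dvd_iterate_sub (f := unicriticalMap d c)
    (fun u v => Dvd.intro_left _ (unicriticalMap_sub_unicriticalMap v u).symm)
    n (unicriticalMap d c y) (unicriticalMap d c x)
  rw [← iterate_succ_apply, ← iterate_succ_apply, hx.eq, hy.eq,
    unicriticalMap_sub_unicriticalMap] at hq
  by_contra hne
  have hsq : s * q = 1 := by
    refine mul_left_cancel₀ (sub_ne_zero.2 (Ne.symm hne)) ?_
    linear_combination -hq
  exact hP (Ideal.eq_top_of_isUnit_mem P hs (IsUnit.of_mul_eq_one q hsq))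

theorem iterate_unicriticalMap_zero_mem_iff_dvd (hd : 2 ≤ d) {m n : ℕ} (hn : 0 < n)
    (hcycle : minimalPeriod (unicriticalMap d c) ((unicriticalMap d c)^[m] 0) = n)
    {P : Ideal R} (hP : P ≠ ⊤) {i : ℕ} (hi : 0 < i) (hiP : (unicriticalMap d c)^[i] 0 ∈ P)
    (j : ℕ) : (unicriticalMap d c)^[j] 0 ∈ P ↔ n ∣ j := by
  suffices minimalPeriod (unicriticalMap d (Ideal.Quotient.mk P c)) 0 = n by
    rw [iterate_unicriticalMap_zero_mem_iff, this]
  set f := unicriticalMap d c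
  set r := minimalPeriod (unicriticalMap d (Ideal.Quotient.mk P c)) 0
  have hr : 0 < r := Nat.pos_of_dvd_of_pos ((iterate_unicriticalMap_zero_mem_iff P i).1 hiP) hi
  obtain ⟨k, hk⟩ : ∃ k, m * r = k + m :=
    ⟨m * r - m, by have := Nat.le_mul_of_pos_right m hr; omega⟩
  set x := f^[m * r] 0
  have hxP : x ∈ P := (iterate_unicriticalMap_zero_mem_iff P _).2 (dvd_mul_left r m)
  have hx : minimalPeriod f x = n := by
    rw [show x = f^[k] (f^[m] 0) by rw [← iterate_add_apply, ← hk],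
      minimalPeriod_apply_iterate (minimalPeriod_pos_iff_mem_periodicPts.1 (hcycle ▸ hn)),
      hcycle]
  have hxn : IsPeriodicPt f n x := hx ▸ isPeriodicPt_minimalPeriod f x
  have hrn : r ∣ n := by
    have : f^[n + m * r] 0 ∈ P := by rwa [iterate_add_apply, hxn.eq]
    exact (Nat.dvd_add_left (dvd_mul_left r m)).1
      ((iterate_unicriticalMap_zero_mem_iff P _).1 this)
  have hnr : n ∣ r := by
    have hyP : f^[r] x ∈ P := by
      rw [← iterate_add_apply]
      exact (iterate_unicriticalMap_zero_mem_iff P _).2 ⟨m + 1, by ring⟩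
    rw [← hx, ← isPeriodicPt_iff_minimalPeriod_dvd]
    exact (eq_of_isPeriodicPt_unicriticalMap_of_mem hd hP hn hxn (hxn.apply_iterate r) hxP hyP).symm
  exact Nat.dvd_antisymm hrn hnr

end

theorem stmt8_general (d : ℕ) (hd : 2 ≤ d) (K : Type*) [Field K]
    (c₀ : 𝓞 K)
    (a : ℕ → 𝓞 K) (ha0 : a 0 = 0) (haS : ∀ i, a (i + 1) = a i ^ d + c₀)
    (m n : ℕ) (hn : 1 ≤ n)
    (hper : a (m + n) = a m)
    (hnmin : ∀ k, 0 < k → k < n → a (m + k) ≠ a m) :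
    ∀ i, 1 ≤ i →
      (n ∣ i → Ideal.span {a i} = Ideal.span {a n}) ∧
      (¬ n ∣ i → Ideal.span {a i} = (⊤ : Ideal (𝓞 K))) := by
  set f := unicriticalMap d c₀
  have ha : a = fun i => f^[i] 0 :=
    funext fun i => by rw [eq_iterate_of_succ (f := f) haS i, ha0]
  subst ha
  have hcycle : minimalPeriod f (f^[m] 0) = n := by
    refine minimalPeriod_eq_of_iterate_ne hn ?_ fun k hk hkn => ?_
    · rw [IsPeriodicPt, IsFixedPt, ← iterate_add_apply, add_comm]; exact hper
    · rw [← iterate_add_apply, add_comm]; exact hnmin k hk hkn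
  have hmem (i j : ℕ) (hi : 0 < i) (hj : n ∣ j) : f^[j] 0 ∈ Ideal.span {f^[i] 0} := by
    by_cases htop : Ideal.span {f^[i] 0} = ⊤
    · rw [htop]; exact Submodule.mem_top
    · exact (iterate_unicriticalMap_zero_mem_iff_dvd hd hn hcycle htop hi
        (Ideal.mem_span_singleton_self _) _).2 hj
  intro i hi
  refine ⟨fun hni => le_antisymm ?_ ?_, fun hni => ?_⟩
  · exact (Ideal.span_singleton_le_iff_mem _).2 (hmem n i hn hni)
  · exact (Ideal.span_singleton_le_iff_mem _).2 (hmem i n hi dvd_rfl)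
  · by_contra htop
    exact hni ((iterate_unicriticalMap_zero_mem_iff_dvd hd hn hcycle htop hi
      (Ideal.mem_span_singleton_self _) i).1 (Ideal.mem_span_singleton_self _))

/-- If f(z) = z^d + c₀ is PCF of exact type (m,n) with m ≥ 1 and
K = ℚ(c₀), then for every i ≥ 1 the principal ideal ⟨a_i(c₀)⟩ of O_K equals
⟨a_n(c₀)⟩ if n ∣ i, and equals O_K if n ∤ i. -/
theorem stmt8 (d : ℕ) (hd : 2 ≤ d) (K : Type*) [Field K] [NumberField K]
    (c₀ : 𝓞 K) (hK : Algebra.adjoin ℚ {algebraMap (𝓞 K) K c₀} = ⊤)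
    (a : ℕ → 𝓞 K) (ha0 : a 0 = 0) (haS : ∀ i, a (i + 1) = a i ^ d + c₀)
    (m n : ℕ) (hm : 1 ≤ m) (hn : 1 ≤ n)
    (hper : a (m + n) = a m)
    (hnmin : ∀ k, 0 < k → k < n → a (m + k) ≠ a m)
    (hmmin : ∀ m', m' < m → ∀ k, 0 < k → a (m' + k) ≠ a m') :
    ∀ i, 1 ≤ i →
      (n ∣ i → Ideal.span {a i} = Ideal.span {a n}) ∧
      (¬ n ∣ i → Ideal.span {a i} = (⊤ : Ideal (𝓞 K))) :=
  stmt8_general d hd K c₀ a ha0 haS m n hn hper hnmin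
end

section
/- Let d ≥ 2 and let c₀ ∈ ℚ̄ be such that f(z) = z^d + c₀ is PCF of exact type (m, n) with m ≥ 1. Let K = ℚ(c₀) and let v be a finite place of K with v(d) = 0. Then v(a_i(c₀)) = 0 for all i ≥ 1. -/
/-!
Suppose `v(a_i) > 0` for some `i ≥ 1`. Since `a_s - a_t` divides `a_{s+k} - a_{t+k}`, the orbit
of `0` is then periodic modulo `v`, so `a_{t+n} ≡ a_t` for every `t`. For
`x = a_{m-1+n} ≠ y = a_{m-1}` we have `x^d = y^d`, hence `x - y ∣ d y^{d-1}`, and as `v(d) = 0`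
this forces `v(y) > 0`. All positive values `v(a_t)` are equal to a common `w > 0`, because
`a_s^d ∣ a_{s+t} - a_t` for `t ≥ 1`. Then `(d - 1) w ≥ v(x - y) ≥ d · v(a_n) = d w`, which
is absurd.
-/

open NumberField IsDedekindDomain Finset

section Orbit

variable {R : Type*} [CommRing R]

/-- The orbit `a_i = f^i(0)` of the critical point of `f(z) = z^d + c`. -/
def critOrbit (d : ℕ) (c : R) : ℕ → R
  | 0 => 0
  | i + 1 => critOrbit d c i ^ d + c

variable {d : ℕ} {c : R}

@[simp]
theorem critOrbit_zero : critOrbit d c 0 = 0 := rfl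

theorem critOrbit_succ (i : ℕ) : critOrbit d c (i + 1) = critOrbit d c i ^ d + c := rfl

theorem critOrbit_sub_dvd_sub_add (s t k : ℕ) :
    critOrbit d c s - critOrbit d c t ∣ critOrbit d c (s + k) - critOrbit d c (t + k) := by
  induction k with
  | zero => rfl
  | succ k ih =>
    rw [← add_assoc, ← add_assoc, critOrbit_succ, critOrbit_succ, add_sub_add_right_eq_sub]
    exact ih.trans (sub_dvd_pow_sub_pow _ _ _)

theorem critOrbit_dvd_sub_add (s t : ℕ) :
    critOrbit d c s ∣ critOrbit d c (s + t) - critOrbit d c t := by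
  simpa using critOrbit_sub_dvd_sub_add (d := d) (c := c) s 0 t

theorem critOrbit_dvd_sub_mul_add (s k t : ℕ) :
    critOrbit d c s ∣ critOrbit d c (s * k + t) - critOrbit d c t := by
  induction k with
  | zero => simp
  | succ k ih =>
    have hsplit : critOrbit d c (s * (k + 1) + t) - critOrbit d c t =
        (critOrbit d c (s + (s * k + t)) - critOrbit d c (s * k + t)) +
          (critOrbit d c (s * k + t) - critOrbit d c t) := by
      rw [show s * (k + 1) + t = s + (s * k + t) by ring]
      ring
    rw [hsplit]
    exact dvd_add (critOrbit_dvd_sub_add _ _) ih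

theorem critOrbit_pow_dvd_sub_add (hd : d ≠ 0) (s t : ℕ) :
    critOrbit d c s ^ d ∣ critOrbit d c (t + 1 + s) - critOrbit d c (t + 1) := by
  have h := critOrbit_sub_dvd_sub_add (d := d) (c := c) (s + 1) 1 t
  rwa [critOrbit_succ, critOrbit_succ 0, critOrbit_zero, zero_pow hd, zero_add,
    add_sub_cancel_right, show s + 1 + t = t + 1 + s by ring, add_comm 1 t] at h

theorem critOrbit_pow_eq_of_succ_eq {s t : ℕ}
    (h : critOrbit d c (s + 1) = critOrbit d c (t + 1)) :
    critOrbit d c s ^ d = critOrbit d c t ^ d :=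
  add_right_cancel h

theorem critOrbit_add_period {m n : ℕ} (hper : critOrbit d c (m + n) = critOrbit d c m)
    (k : ℕ) :
    critOrbit d c (m + k + n) = critOrbit d c (m + k) := by
  have h := critOrbit_sub_dvd_sub_add (d := d) (c := c) (m + n) m k
  rwa [hper, sub_self, zero_dvd_iff, sub_eq_zero, add_right_comm] at h

theorem critOrbit_dvd_sub_period {m n s : ℕ}
    (hper : critOrbit d c (m + n) = critOrbit d c m) (hs : 1 ≤ s) (t : ℕ) :
    critOrbit d c s ∣ critOrbit d c (t + n) - critOrbit d c t := by
  obtain ⟨k, hk⟩ : ∃ k, s * m + t = m + k :=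
    ⟨s * m + t - m, by have := Nat.le_mul_of_pos_left m hs; omega⟩
  have hshift : critOrbit d c (s * m + (t + n)) = critOrbit d c (s * m + t) := by
    rw [← add_assoc, hk, critOrbit_add_period hper]
  have hsplit : critOrbit d c (t + n) - critOrbit d c t =
      (critOrbit d c (s * m + t) - critOrbit d c t) -
        (critOrbit d c (s * m + (t + n)) - critOrbit d c (t + n)) := by
    rw [hshift]
    ring
  rw [hsplit]
  exact dvd_sub (critOrbit_dvd_sub_mul_add _ _ _) (critOrbit_dvd_sub_mul_add _ _ _)

end Orbit

theorem sub_dvd_natCast_mul_pow_of_pow_eq {R : Type*} [CommRing R] [IsDomain R] {x y : R} {d : ℕ}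
    (hne : x ≠ y) (h : x ^ d = y ^ d) : x - y ∣ d * y ^ (d - 1) := by
  have hsum : ∑ i ∈ range d, x ^ i * y ^ (d - 1 - i) = 0 := by
    have hmul := geom_sum₂_mul x y d
    rw [h, sub_self] at hmul
    exact (mul_eq_zero.1 hmul).resolve_right (sub_ne_zero.2 hne)
  exact (dvd_geom_sum₂_iff_of_dvd_sub dvd_rfl).1 (hsum ▸ dvd_zero _)

theorem ne_zero_of_pow_eq_pow_of_ne {M : Type*} [MonoidWithZero M] [NoZeroDivisors M] {x y : M}
    {d : ℕ} (hd : d ≠ 0) (hne : x ≠ y) (h : x ^ d = y ^ d) : y ≠ 0 := by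
  rintro rfl
  rw [zero_pow hd, pow_eq_zero_iff hd] at h
  exact hne h

namespace Valuation

variable {R Γ₀ : Type*} [CommRing R] [LinearOrderedCommGroupWithZero Γ₀]
  {V : Valuation R Γ₀}

theorem map_le_of_dvd (hV : ∀ x, V x ≤ 1) {x y : R} (h : x ∣ y) : V y ≤ V x := by
  obtain ⟨z, rfl⟩ := h
  rw [map_mul]
  exact mul_le_of_le_one_right' (hV z)

theorem pow_pred_le_map_sub_of_pow_eq [IsDomain R] (hV : ∀ x, V x ≤ 1) {d : ℕ} (hVd : V d = 1)
    {x y : R} (hne : x ≠ y) (h : x ^ d = y ^ d) : V y ^ (d - 1) ≤ V (x - y) := by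
  simpa only [map_mul, map_pow, hVd, one_mul] using
    V.map_le_of_dvd hV (sub_dvd_natCast_mul_pow_of_pow_eq hne h)

end Valuation

/-- Euclid-style descent on `(s, t)`: as `a_s^d ∣ a_t - a_{t-s}` and `V(a_s)^d < V(a_s)`, the
values `V(a_t)` and `V(a_{t-s})` agree. -/
theorem valuation_critOrbit_eq_of_lt_one {R Γ₀ : Type*} [CommRing R]
    [LinearOrderedCommGroupWithZero Γ₀] {V : Valuation R Γ₀} (hV : ∀ x, V x ≤ 1) {d : ℕ}
    (hd : 2 ≤ d) {c : R} (hV0 : ∀ t, 1 ≤ t → V (critOrbit d c t) ≠ 0) {s t : ℕ}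
    (hs : 1 ≤ s) (ht : 1 ≤ t) (hVs : V (critOrbit d c s) < 1) (hVt : V (critOrbit d c t) < 1) :
    V (critOrbit d c t) = V (critOrbit d c s) := by
  induction hN : s + t using Nat.strong_induction_on generalizing s t with
  | _ N ih =>
  wlog hst : s ≤ t generalizing s t
  · exact (this ht hs hVt hVs (by omega) (by omega)).symm
  obtain rfl | hlt := hst.eq_or_lt
  · rfl
  obtain ⟨r, rfl⟩ : ∃ r, t = r + 1 + s := ⟨t - s - 1, by omega⟩
  have hstep :
      V (critOrbit d c (r + 1 + s) - critOrbit d c (r + 1)) ≤ V (critOrbit d c s) ^ d := by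
    simpa only [map_pow] using V.map_le_of_dvd hV (critOrbit_pow_dvd_sub_add (by omega) s r)
  have hsmall : V (critOrbit d c s) ^ d < V (critOrbit d c s) :=
    pow_lt_self_of_lt_one₀ (zero_lt_iff.2 (hV0 s hs)) hVs hd
  have hVr : V (critOrbit d c (r + 1)) < 1 := by
    rw [← sub_sub_cancel (critOrbit d c (r + 1 + s)) (critOrbit d c (r + 1))]
    exact V.map_sub_lt hVt ((hstep.trans hsmall.le).trans_lt hVs)
  have hr : V (critOrbit d c (r + 1)) = V (critOrbit d c s) :=
    ih (s + (r + 1)) (by omega) hs (by omega) hVs hVr rfl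
  rw [← hr]
  exact V.map_eq_of_sub_lt (hr ▸ hstep.trans_lt hsmall)

theorem stmt9_general (d : ℕ) (hd : 2 ≤ d) (K : Type*) [Field K] [NumberField K]
    (c₀ : 𝓞 K)
    (a : ℕ → 𝓞 K) (ha0 : a 0 = 0) (haS : ∀ i, a (i + 1) = a i ^ d + c₀)
    (m n : ℕ) (hm : 1 ≤ m) (hn : 1 ≤ n)
    (hper : a (m + n) = a m)
    (hmmin : ∀ m', m' < m → ∀ k, 0 < k → a (m' + k) ≠ a m')
    (v : HeightOneSpectrum (𝓞 K)) (hvd : v.intValuation (d : 𝓞 K) = 1) :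
    ∀ i, 1 ≤ i → v.intValuation (a i) = 1 := by
  have ha : a = critOrbit d c₀ := funext fun i => by induction i <;> simp [critOrbit, *]
  subst ha
  set V := v.intValuation
  have hV : ∀ x, V x ≤ 1 := v.intValuation_le_one
  have hV0 : ∀ t, 1 ≤ t → V (critOrbit d c₀ t) ≠ 0 := fun t ht =>
    v.intValuation_ne_zero _ fun h => hmmin 0 hm t ht (by simpa using h)
  intro i hi
  by_contra hi1
  replace hi1 : V (critOrbit d c₀ i) < 1 := (hV _).lt_of_ne hi1
  have hperiod : ∀ t, V (critOrbit d c₀ (t + n) - critOrbit d c₀ t) < 1 := fun t =>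
    (V.map_le_of_dvd hV (critOrbit_dvd_sub_period hper hi t)).trans_lt hi1
  have hVn : V (critOrbit d c₀ n) < 1 := by simpa using hperiod 0
  obtain ⟨k, rfl⟩ : ∃ k, m = k + 1 := ⟨m - 1, by omega⟩
  have hxy : critOrbit d c₀ (k + n) ≠ critOrbit d c₀ k := hmmin k (by omega) n hn
  have hpow : critOrbit d c₀ (k + n) ^ d = critOrbit d c₀ k ^ d :=
    critOrbit_pow_eq_of_succ_eq (by rwa [add_right_comm] at hper)
  have hlow := V.pow_pred_le_map_sub_of_pow_eq hV hvd hxy hpow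
  obtain ⟨j, rfl⟩ : ∃ j, k = j + 1 := Nat.exists_eq_succ_of_ne_zero fun hk =>
    ne_zero_of_pow_eq_pow_of_ne (by omega) hxy hpow (hk ▸ critOrbit_zero)
  have hy : V (critOrbit d c₀ (j + 1)) < 1 :=
    (pow_lt_one_iff (by omega)).1 (hlow.trans_lt (hperiod _))
  rw [valuation_critOrbit_eq_of_lt_one hV hd hV0 hn (by omega : 1 ≤ j + 1) hVn hy] at hlow
  have hup := V.map_le_of_dvd hV (critOrbit_pow_dvd_sub_add (c := c₀) (by omega : d ≠ 0) n j)
  rw [map_pow] at hup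
  have hW : V (critOrbit d c₀ n) ^ d < V (critOrbit d c₀ n) ^ (d - 1) :=
    pow_lt_pow_right_of_lt_one₀ (zero_lt_iff.2 (hV0 n hn)) hVn (by omega)
  exact not_le.2 hW (hlow.trans hup)

/-- If f(z) = z^d + c₀ is PCF of exact type (m,n) with m ≥ 1,
K = ℚ(c₀), and v is a finite place of K with v(d) = 0, then v(a_i(c₀)) = 0 for
all i ≥ 1 (multiplicatively: intValuation = 1). -/
theorem stmt9 (d : ℕ) (hd : 2 ≤ d) (K : Type*) [Field K] [NumberField K]
    (c₀ : 𝓞 K) (hK : Algebra.adjoin ℚ {algebraMap (𝓞 K) K c₀} = ⊤)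
    (a : ℕ → 𝓞 K) (ha0 : a 0 = 0) (haS : ∀ i, a (i + 1) = a i ^ d + c₀)
    (m n : ℕ) (hm : 1 ≤ m) (hn : 1 ≤ n)
    (hper : a (m + n) = a m)
    (hnmin : ∀ k, 0 < k → k < n → a (m + k) ≠ a m)
    (hmmin : ∀ m', m' < m → ∀ k, 0 < k → a (m' + k) ≠ a m')
    (v : HeightOneSpectrum (𝓞 K)) (hvd : v.intValuation (d : 𝓞 K) = 1) :
    ∀ i, 1 ≤ i → v.intValuation (a i) = 1 :=
  stmt9_general d hd K c₀ a ha0 haS m n hm hn hper hmmin v hvd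
end
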